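/- arXiv:1703.09677 — 4 statements merged into one kernel-verified Lean document; each statement's English description precedes it below -/
import Mathlib

section
/- Let U = (U_1,...,U_d) be a tuple of commuting bounded operators on a Hilbert space K such that each pairwise product commutes and ∑_{k=1}^d U_k U_k* = ∑_{k=1}^d U_k* U_k = I. Then each U_k is normal, i.e., U is a spherical unitary. (Assume the Athavale extension theorem: every spherical isometry extends to a spherical unitary.) -/
/-!
Let `ι : K → L` be the isometric embedding along which `V` extends `U`. Since `Vₖ ∘ ι = ι ∘ Uₖ`,
the vector `Vₖ* (ι x) - ι (Uₖ* x)` has squared norm `‖Vₖ* (ι x)‖² - ‖Uₖ* x‖²`. Summing over `k`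
and using `∑ Vₖ Vₖ* = I` and `∑ Uₖ Uₖ* = I` gives `‖ι x‖² - ‖x‖² = 0`, so `ι` also intertwines
the adjoints. Normality of `Vₖ` then descends to `Uₖ`:
`‖Uₖ x‖ = ‖Vₖ (ι x)‖ = ‖Vₖ* (ι x)‖ = ‖Uₖ* x‖`.
-/

open scoped InnerProductSpace

namespace ContinuousLinearMap

variable {𝕜 E F : Type*} [RCLike 𝕜]
  [NormedAddCommGroup E] [InnerProductSpace 𝕜 E] [CompleteSpace E]
  [NormedAddCommGroup F] [InnerProductSpace 𝕜 F] [CompleteSpace F]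

theorem sum_norm_sq_star_apply {κ : Type*} [Fintype κ] {A : κ → E →L[𝕜] E}
    (hA : ∑ k, A k * star (A k) = 1) (x : E) :
    ∑ k, ‖star (A k) x‖ ^ 2 = ‖x‖ ^ 2 := by
  have hterm : ∀ k, ‖star (A k) x‖ ^ 2 = RCLike.re ⟪x, (A k * star (A k)) x⟫_𝕜 := fun k => by
    rw [star_eq_adjoint, apply_norm_sq_eq_inner_adjoint_right, adjoint_adjoint]; rfl
  simp_rw [hterm]
  rw [← map_sum, ← inner_sum, ← sum_apply, hA, one_apply_eq_self, inner_self_eq_norm_sq]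

theorem norm_sq_star_apply_sub_map {ι : E →ₗᵢ[𝕜] F} {U : E →L[𝕜] E} {V : F →L[𝕜] F}
    (hVU : ∀ x, V (ι x) = ι (U x)) (x : E) :
    ‖star V (ι x) - ι (star U x)‖ ^ 2 = ‖star V (ι x)‖ ^ 2 - ‖star U x‖ ^ 2 := by
  have hcross : RCLike.re ⟪star V (ι x), ι (star U x)⟫_𝕜 = ‖star U x‖ ^ 2 := by
    rw [star_eq_adjoint V, adjoint_inner_left, hVU, ι.inner_map_map, star_eq_adjoint,
      ← adjoint_inner_left, inner_self_eq_norm_sq]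
  rw [@norm_sub_sq 𝕜, hcross, ι.norm_map]
  ring

theorem star_apply_map_of_sum_mul_star_eq_one {κ : Type*} [Fintype κ] {ι : E →ₗᵢ[𝕜] F}
    {U : κ → E →L[𝕜] E} {V : κ → F →L[𝕜] F} (hVU : ∀ k x, V k (ι x) = ι (U k x))
    (hU : ∑ k, U k * star (U k) = 1) (hV : ∑ k, V k * star (V k) = 1) (k : κ) (x : E) :
    star (V k) (ι x) = ι (star (U k) x) := by
  have hsum : ∑ k, ‖star (V k) (ι x) - ι (star (U k) x)‖ ^ 2 = 0 := by
    simp_rw [norm_sq_star_apply_sub_map (hVU _), Finset.sum_sub_distrib,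
      sum_norm_sq_star_apply hU, sum_norm_sq_star_apply hV, ι.norm_map, sub_self]
  have hk := (Finset.sum_eq_zero_iff_of_nonneg fun _ _ => by positivity).mp hsum k
    (Finset.mem_univ k)
  simpa [sub_eq_zero] using hk

theorem isStarNormal_of_map_of_star_map {ι : E →ₗᵢ[𝕜] F} {U : E →L[𝕜] E} {V : F →L[𝕜] F}
    (hV : IsStarNormal V) (hVU : ∀ x, V (ι x) = ι (U x))
    (hVU_star : ∀ x, star V (ι x) = ι (star U x)) : IsStarNormal U := by
  refine isStarNormal_iff_norm_eq_adjoint.mpr fun x => ?_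
  calc ‖U x‖ = ‖V (ι x)‖ := by rw [hVU, ι.norm_map]
    _ = ‖star V (ι x)‖ := isStarNormal_iff_norm_eq_adjoint.mp hV (ι x)
    _ = ‖adjoint U x‖ := by rw [hVU_star, ι.norm_map, star_eq_adjoint]

end ContinuousLinearMap

theorem stmt0_general {d : ℕ} {K L : Type*}
    [NormedAddCommGroup K] [InnerProductSpace ℂ K] [CompleteSpace K]
    [NormedAddCommGroup L] [InnerProductSpace ℂ L] [CompleteSpace L]
    (U : Fin d → K →L[ℂ] K)
    (hrow : (∑ i, U i * star (U i)) = 1)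
    -- Athavale's theorem applied to the spherical isometry `U`:
    (ι : K →ₗᵢ[ℂ] L) (V : Fin d → L →L[ℂ] L)
    (hVnormal : ∀ i, IsStarNormal (V i))
    (hVrow : (∑ i, V i * star (V i)) = 1)
    (hext : ∀ i x, V i (ι x) = ι (U i x)) :
    ∀ i, IsStarNormal (U i) := fun i =>
  ContinuousLinearMap.isStarNormal_of_map_of_star_map (hVnormal i) (hext i)
    (ContinuousLinearMap.star_apply_map_of_sum_mul_star_eq_one hext hrow hVrow i)

/-- If a commuting tuple `U` of bounded operators on a Hilbert space `K` satisfies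
`∑ Uₖ Uₖ* = ∑ Uₖ* Uₖ = I`, then each `Uₖ` is normal, i.e. `U` is a spherical unitary.
Athavale's extension theorem is assumed, in the form of an extension of `U` (which is a
spherical isometry together with its adjoint tuple) to a spherical unitary `V` on a larger
Hilbert space `L`, via a linear isometry `ι : K → L`. -/
theorem stmt0 {d : ℕ} {K L : Type*}
    [NormedAddCommGroup K] [InnerProductSpace ℂ K] [CompleteSpace K]
    [NormedAddCommGroup L] [InnerProductSpace ℂ L] [CompleteSpace L]
    (U : Fin d → K →L[ℂ] K)
    (hUcomm : ∀ i j, U i * U j = U j * U i)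
    (hrow : (∑ i, U i * star (U i)) = 1)
    (hcol : (∑ i, star (U i) * U i) = 1)
    -- Athavale's theorem applied to the spherical isometry `U`:
    (ι : K →ₗᵢ[ℂ] L) (V : Fin d → L →L[ℂ] L)
    (hVcomm : ∀ i j, V i * V j = V j * V i)
    (hVnormal : ∀ i, IsStarNormal (V i))
    (hVrow : (∑ i, V i * star (V i)) = 1)
    (hext : ∀ i x, V i (ι x) = ι (U i x)) :
    ∀ i, IsStarNormal (U i) :=
  stmt0_general U hrow ι V hVnormal hVrow hext
end

section
/- If a spherical unitary V = (V_1,...,V_d) on a Hilbert space L restricts to an invariant subspace M (i.e., each V_k maps M into M) such that the compressions U_k = V_k|_M satisfy ∑ U_k U_k* = I on M, then M is reducing for each V_k, and U = (U_1,...,U_d) is itself a spherical unitary. -/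
/-!
For `x ∈ M`, the identity `∑ Vₖ Vₖ* = 1` gives `∑ ‖Vₖ* x‖² = ‖x‖²`, and `∑ Uₖ Uₖ* = 1` gives
`∑ ‖P Vₖ* x‖² = ‖x‖²`, because `Uₖ*` is the compression `P Vₖ*|_M` with `P` the orthogonal
projection onto `M`. Since `P` is a contraction, the sums can only agree if `‖P Vₖ* x‖ = ‖Vₖ* x‖`
for every `k`, i.e. `Vₖ* x ∈ M`. So `Uₖ*` is the restriction of `Vₖ*`, and normality and
commutativity pass from `V` to its restriction `U`.
-/

open scoped InnerProductSpace

theorem Commute.of_restrict {R E : Type*} [Semiring R] [AddCommMonoid E] [Module R E]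
    [TopologicalSpace E] {K : Submodule R E} {A A' : E →L[R] E} {B B' : K →L[R] K}
    (hB : ∀ x, (B x : E) = A x) (hB' : ∀ x, (B' x : E) = A' x) (h : Commute A A') :
    Commute B B' := by
  ext x
  change (B (B' x) : E) = B' (B x)
  rw [hB, hB', hB', hB]
  exact congr($h x)

section

variable {𝕜 E : Type*} [RCLike 𝕜] [NormedAddCommGroup E] [InnerProductSpace 𝕜 E]

theorem ContinuousLinearMap.sum_norm_sq_star_apply_of_sum_mul_star_eq_one [CompleteSpace E]
    {ι : Type*} [Fintype ι] {T : ι → E →L[𝕜] E} (hT : ∑ i, T i * star (T i) = 1) (x : E) :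
    ∑ i, ‖star (T i) x‖ ^ 2 = ‖x‖ ^ 2 := by
  have hnorm (i : ι) : ‖star (T i) x‖ ^ 2 = RCLike.re ⟪(T i * star (T i)) x, x⟫_𝕜 := by
    rw [ContinuousLinearMap.star_eq_adjoint,
      ContinuousLinearMap.apply_norm_sq_eq_inner_adjoint_left, ContinuousLinearMap.adjoint_adjoint]
    rfl
  simp_rw [hnorm, ← map_sum, ← sum_inner, ← sum_apply, hT,
    one_apply_eq_self, inner_self_eq_norm_sq]

theorem Submodule.forall_mem_of_sum_norm_sq_starProjection_eq (K : Submodule 𝕜 E)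
    [K.HasOrthogonalProjection] {ι : Type*} [Fintype ι] {w : ι → E}
    (h : ∑ i, ‖K.starProjection (w i)‖ ^ 2 = ∑ i, ‖w i‖ ^ 2) (i : ι) : w i ∈ K := by
  have hle (j : ι) (_ : j ∈ Finset.univ) : ‖K.starProjection (w j)‖ ^ 2 ≤ ‖w j‖ ^ 2 := by
    gcongr
    exact K.norm_starProjection_apply_le _
  have heq := (Finset.sum_eq_sum_iff_of_le hle).1 h i (Finset.mem_univ i)
  rw [K.mem_iff_norm_starProjection]
  exact (sq_eq_sq₀ (norm_nonneg _) (norm_nonneg _)).1 heq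

theorem ContinuousLinearMap.star_apply_eq_orthogonalProjectionOnto_of_restrict [CompleteSpace E]
    {K : Submodule 𝕜 E} [CompleteSpace K] {A : E →L[𝕜] E} {B : K →L[𝕜] K}
    (hB : ∀ x, (B x : E) = A x) (x : K) :
    star B x = K.orthogonalProjectionOnto (star A x) := by
  refine ext_inner_right 𝕜 fun y => ?_
  rw [ContinuousLinearMap.star_eq_adjoint, ContinuousLinearMap.adjoint_inner_left,
    Submodule.inner_orthogonalProjectionOnto_eq_of_mem_right, ContinuousLinearMap.star_eq_adjoint,
    ContinuousLinearMap.adjoint_inner_left, Submodule.coe_inner, hB]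

variable [CompleteSpace E] {ι : Type*} [Fintype ι] {K : Submodule 𝕜 E} [CompleteSpace K]
  {A : ι → E →L[𝕜] E} {B : ι → K →L[𝕜] K}

theorem Submodule.star_apply_mem_of_restrict_of_sum_mul_star_eq_one
    (hA : ∑ i, A i * star (A i) = 1) (hB : ∀ i x, (B i x : E) = A i x)
    (hBrow : ∑ i, B i * star (B i) = 1) (i : ι) (x : K) : star (A i) x ∈ K := by
  refine K.forall_mem_of_sum_norm_sq_starProjection_eq (w := fun j => star (A j) x) ?_ i
  calc ∑ j, ‖K.starProjection (star (A j) x)‖ ^ 2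
      = ∑ j, ‖star (B j) x‖ ^ 2 := by
        simp_rw [ContinuousLinearMap.star_apply_eq_orthogonalProjectionOnto_of_restrict (hB _),
          K.starProjection_apply]
        rfl
    _ = ‖(x : E)‖ ^ 2 := ContinuousLinearMap.sum_norm_sq_star_apply_of_sum_mul_star_eq_one hBrow x
    _ = ∑ j, ‖star (A j) x‖ ^ 2 :=
        (ContinuousLinearMap.sum_norm_sq_star_apply_of_sum_mul_star_eq_one hA x).symm

theorem ContinuousLinearMap.star_apply_eq_of_restrict_of_sum_mul_star_eq_one
    (hA : ∑ i, A i * star (A i) = 1) (hB : ∀ i x, (B i x : E) = A i x)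
    (hBrow : ∑ i, B i * star (B i) = 1) (i : ι) (x : K) : (star (B i) x : E) = star (A i) x := by
  rw [star_apply_eq_orthogonalProjectionOnto_of_restrict (hB i), ← K.starProjection_apply,
    K.starProjection_eq_self_iff]
  exact K.star_apply_mem_of_restrict_of_sum_mul_star_eq_one hA hB hBrow i x

end

theorem stmt1_general {d : ℕ} {L : Type*}
    [NormedAddCommGroup L] [InnerProductSpace ℂ L] [CompleteSpace L]
    (V : Fin d → L →L[ℂ] L)
    (hVcomm : ∀ i j, V i * V j = V j * V i)
    (hVnormal : ∀ i, IsStarNormal (V i))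
    (hVrow : (∑ i, V i * star (V i)) = 1)
    (M : Submodule ℂ L) [CompleteSpace M]
    (U : Fin d → M →L[ℂ] M)
    (hU : ∀ i (x : M), (U i x : L) = V i (x : L))
    (hrow : (∑ i, U i * star (U i)) = 1) :
    (∀ i, ∀ x ∈ M, star (V i) x ∈ M) ∧
      (∀ i, IsStarNormal (U i)) ∧ (∀ i j, U i * U j = U j * U i) := by
  have hstarU := ContinuousLinearMap.star_apply_eq_of_restrict_of_sum_mul_star_eq_one hVrow hU hrow
  refine ⟨fun i x hx => M.star_apply_mem_of_restrict_of_sum_mul_star_eq_one hVrow hU hrow i ⟨x, hx⟩,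
    fun i => ⟨?_⟩, fun i j => ?_⟩
  · exact (hVnormal i).star_comm_self.of_restrict (hstarU i) (hU i)
  · exact Commute.of_restrict (hU i) (hU j) (hVcomm i j)

/-- If a spherical unitary `V` on `L` restricts to an invariant subspace `M` such that the
restrictions `Uₖ = Vₖ|_M` satisfy `∑ Uₖ Uₖ* = I` on `M`, then `M` is reducing for each `Vₖ`
and `U` is itself a spherical unitary. -/
theorem stmt1 {d : ℕ} {L : Type*}
    [NormedAddCommGroup L] [InnerProductSpace ℂ L] [CompleteSpace L]
    (V : Fin d → L →L[ℂ] L)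
    (hVcomm : ∀ i j, V i * V j = V j * V i)
    (hVnormal : ∀ i, IsStarNormal (V i))
    (hVrow : (∑ i, V i * star (V i)) = 1)
    (M : Submodule ℂ L) (hMclosed : IsClosed (M : Set L)) [CompleteSpace M]
    (hinv : ∀ i, ∀ x ∈ M, V i x ∈ M)
    (U : Fin d → M →L[ℂ] M)
    (hU : ∀ i (x : M), (U i x : L) = V i (x : L))
    (hrow : (∑ i, U i * star (U i)) = 1) :
    (∀ i, ∀ x ∈ M, star (V i) x ∈ M) ∧
      (∀ i, IsStarNormal (U i)) ∧ (∀ i j, U i * U j = U j * U i) :=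
  stmt1_general V hVcomm hVnormal hVrow M U hU hrow
end

section
/- Let μ be a positive regular Borel measure on the unit sphere ∂B_d ⊆ ℂ^d that is singular with respect to every representing measure of the origin (totally singular). Then the analytic polynomials are weak-* dense in L^∞(μ). Equivalently, if f ∈ L^1(μ) satisfies ∫ p f dμ = 0 for all analytic polynomials p, then f = 0 in L^1(μ). (Assume the Cole–Range theorem: every measure annihilating the ball algebra is absolutely continuous with respect to some representing measure of the origin.) -/
open MeasureTheory

noncomputable section

/-- The Borel σ-algebra on `ℂ^d` (product of the Borel σ-algebras on the factors). -/
instance {d : ℕ} : MeasurableSpace (EuclideanSpace ℂ (Fin d)) :=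
  MeasurableSpace.comap (fun x : EuclideanSpace ℂ (Fin d) => (WithLp.ofLp x : Fin d → ℂ))
    MeasurableSpace.pi

/-- The unit sphere in `ℂ^d`. -/
abbrev SphereCd (d : ℕ) : Type := Metric.sphere (0 : EuclideanSpace ℂ (Fin d)) 1

/-- An analytic polynomial, as a function on the unit sphere. -/
def spolyFn {d : ℕ} (p : MvPolynomial (Fin d) ℂ) (z : SphereCd d) : ℂ :=
  MvPolynomial.eval (fun i => (z : EuclideanSpace ℂ (Fin d)) i) p

/-- A representing measure for the origin: a probability measure on the sphere integrating
analytic polynomials to their value at `0`. -/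
def IsRepMeasure {d : ℕ} (ρ : Measure (SphereCd d)) : Prop :=
  IsProbabilityMeasure ρ ∧
    ∀ p : MvPolynomial (Fin d) ℂ, ∫ z, spolyFn p z ∂ρ = MvPolynomial.eval (fun _ => (0 : ℂ)) p

open scoped ENNReal

lemma ae_eq_zero_of_withDensity_nnnorm_absolutelyContinuous {α E : Type*} [MeasurableSpace α]
    [NormedAddCommGroup E] {μ ρ : Measure α} {f : α → E} (hf : AEStronglyMeasurable f μ)
    (hμρ : μ ⟂ₘ ρ) (hac : μ.withDensity (fun z => (‖f z‖₊ : ℝ≥0∞)) ≪ ρ) :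
    ∀ᵐ z ∂μ, f z = 0 := by
  have hsing : μ.withDensity (fun z => (‖f z‖₊ : ℝ≥0∞)) ⟂ₘ ρ :=
    hμρ.mono_ac (withDensity_absolutelyContinuous _ _) .rfl
  have hzero := (withDensity_eq_zero_iff hf.enorm).mp
    (Measure.eq_zero_of_absolutelyContinuous_of_mutuallySingular hac hsing)
  filter_upwards [hzero] with z hz
  simpa using hz

/-- If `μ` is a positive regular Borel measure on the unit sphere which is totally singular
(singular with respect to every representing measure of the origin), then the analytic
polynomials are weak-* dense in `L^∞(μ)`: any `f ∈ L¹(μ)` with `∫ p f dμ = 0` for all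
analytic polynomials `p` vanishes `μ`-a.e.  The Cole–Range theorem is assumed as a
hypothesis. -/
theorem stmt11 {d : ℕ} (μ : Measure (SphereCd d)) [IsFiniteMeasure μ] [μ.Regular]
    (hsing : ∀ ρ : Measure (SphereCd d), IsRepMeasure ρ → μ.MutuallySingular ρ)
    (hColeRange : ∀ (ν : Measure (SphereCd d)), IsFiniteMeasure ν → ν.Regular →
      ∀ g : SphereCd d → ℂ, Integrable g ν →
      (∀ p : MvPolynomial (Fin d) ℂ, ∫ z, spolyFn p z * g z ∂ν = 0) →
      ∃ ρ : Measure (SphereCd d), IsRepMeasure ρ ∧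
        (ν.withDensity fun z => (‖g z‖₊ : ENNReal)) ≪ ρ) :
    ∀ f : SphereCd d → ℂ, Integrable f μ →
      (∀ p : MvPolynomial (Fin d) ℂ, ∫ z, spolyFn p z * f z ∂μ = 0) →
      ∀ᵐ z ∂μ, f z = 0 := by
  intro f hf hann
  obtain ⟨ρ, hrep, hac⟩ := hColeRange μ ‹_› ‹_› f hf hann
  exact ae_eq_zero_of_withDensity_nnnorm_absolutelyContinuous hf.aestronglyMeasurable
    (hsing ρ hrep) hac
end
end

section
/- Let T be a commuting tuple of operators on a Hilbert space K that admits a dilation to M_z^κ ⊕ U on H^κ ⊕ L, where M_z is the shift tuple on a regular unitarily invariant space H and U is a spherical unitary whose scalar spectral measure is Mult(H)-Henkin. Then T is Mult(H)-absolutely continuous: the polynomial functional calculus p ↦ p(T) extends to a weak-* continuous algebra homomorphism on Mult(H). (Here one may assume M_z^κ and U are each Mult(H)-absolutely continuous.) -/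
open scoped InnerProductSpace ENNReal
open Filter

noncomputable section

/-- The open unit ball in `ℂ^d`. -/
abbrev Ball (d : ℕ) : Type := {z : EuclideanSpace ℂ (Fin d) // ‖z‖ < 1}

variable {d : ℕ} {H : Type*}
  [NormedAddCommGroup H] [InnerProductSpace ℂ H] [CompleteSpace H]

/-- `A` is the multiplication operator on `H` associated to the multiplier `φ`. -/
def IsMultOp (ev : H →ₗ[ℂ] (Ball d → ℂ)) (φ : Ball d → ℂ) (A : H →L[ℂ] H) : Prop :=
  ∀ (f : H) (z : Ball d), ev (A f) z = φ z * ev f z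

/-- A polynomial, as a function on the ball. -/
def polyFn {d : ℕ} (p : MvPolynomial (Fin d) ℂ) (z : Ball d) : ℂ :=
  MvPolynomial.eval (fun i => (z : EuclideanSpace ℂ (Fin d)) i) p

/-- Evaluation of a polynomial at a (commuting) tuple of elements of an algebra. -/
def opEval {A : Type*} [Ring A] [Algebra ℂ A] {σ : Type*} [Fintype σ]
    (T : σ → A) (p : MvPolynomial σ ℂ) : A :=
  ∑ m ∈ p.support, p.coeff m •
    ((List.finRange (Fintype.card σ)).map fun j =>
      T ((Fintype.equivFin σ).symm j) ^ m ((Fintype.equivFin σ).symm j)).prod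

/-- The tuple `W` is `Mult(H)`-absolutely continuous: the polynomial functional calculus
extends to a weak-* continuous homomorphism on `Mult(H)`.  This is encoded by the standard
characterization: for every sequence of polynomials `pₙ` of multiplier norm at most `1`
converging to `0` pointwise on the ball (i.e. weak-* in `Mult(H)`), the (bounded) sequence
`pₙ(W)` converges to `0` in the weak-* topology of `B(E)`. -/
def TupleMultAC (ev : H →ₗ[ℂ] (Ball d → ℂ)) {E : Type*} [NormedAddCommGroup E]
    [InnerProductSpace ℂ E] (W : Fin d → E →L[ℂ] E) : Prop :=
  ∀ (p : ℕ → MvPolynomial (Fin d) ℂ) (B : ℕ → H →L[ℂ] H),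
    (∀ n, IsMultOp ev (polyFn (p n)) (B n)) → (∀ n, ‖B n‖ ≤ 1) →
    (∀ z : Ball d, Tendsto (fun n => polyFn (p n) z) atTop (nhds 0)) →
    ∀ x y : E, Tendsto (fun n => ⟪opEval W (p n) x, y⟫_ℂ) atTop (nhds 0)

/-! An operator intertwining two tuples intertwines every polynomial in them, so applying this to
the coordinate projections of `H^κ ⊕ L` shows that `p(M_z^κ ⊕ U) = p(M_z^κ) ⊕ p(U)`; hence the
matrix coefficients of `p(S)` are sums of those of `p(M_z^κ)` and `p(U)`, and absolute continuity
passes to direct sums. Since `p(T) = P_K p(S)|_K`, the coefficients `⟪p(T) x, y⟫` with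
`x, y ∈ K` are coefficients of `p(S)`, so it also passes to `T`. -/

section Intertwining

variable {E F : Type*} [NormedAddCommGroup E] [NormedSpace ℂ E]
  [NormedAddCommGroup F] [NormedSpace ℂ F] {X : E →L[ℂ] F}

theorem ContinuousLinearMap.comp_pow_eq_pow_comp {A : E →L[ℂ] E} {B : F →L[ℂ] F}
    (h : X ∘L A = B ∘L X) (m : ℕ) : X ∘L (A ^ m) = (B ^ m) ∘L X := by
  induction m with
  | zero => rfl
  | succ m ih =>
    simp only [pow_succ, ContinuousLinearMap.mul_def, ← ContinuousLinearMap.comp_assoc, ih]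
    rw [ContinuousLinearMap.comp_assoc, h, ← ContinuousLinearMap.comp_assoc]

theorem ContinuousLinearMap.comp_list_prod_map {κ : Type*} {f : κ → E →L[ℂ] E}
    {g : κ → F →L[ℂ] F} (h : ∀ j, X ∘L f j = g j ∘L X) (l : List κ) :
    X ∘L (l.map f).prod = (l.map g).prod ∘L X := by
  induction l with
  | nil => rfl
  | cons j l ih =>
    simp only [List.map_cons, List.prod_cons, ContinuousLinearMap.mul_def]
    rw [← ContinuousLinearMap.comp_assoc, h, ContinuousLinearMap.comp_assoc, ih,
      ContinuousLinearMap.comp_assoc]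

theorem ContinuousLinearMap.comp_opEval {σ : Type*} [Fintype σ] {S : σ → E →L[ℂ] E}
    {M : σ → F →L[ℂ] F} (h : ∀ i, X ∘L S i = M i ∘L X) (p : MvPolynomial σ ℂ) :
    X ∘L opEval S p = opEval M p ∘L X := by
  simp only [opEval, ContinuousLinearMap.comp_finsetSum, ContinuousLinearMap.finsetSum_comp,
    ContinuousLinearMap.comp_smul, ContinuousLinearMap.smul_comp,
    ContinuousLinearMap.comp_list_prod_map fun _ =>
      ContinuousLinearMap.comp_pow_eq_pow_comp (h _) _]

end Intertwining

namespace TupleMultAC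

variable {V : Type*} [NormedAddCommGroup V] [InnerProductSpace ℂ V] {ev : V →ₗ[ℂ] (Ball d → ℂ)}

theorem of_dilation {E : Type*} [NormedAddCommGroup E] [InnerProductSpace ℂ E]
    {S : Fin d → E →L[ℂ] E} (hS : TupleMultAC ev S) (K : Submodule ℂ E)
    [K.HasOrthogonalProjection] {T : Fin d → K →L[ℂ] K}
    (hdil : ∀ (p : MvPolynomial (Fin d) ℂ) (x : K),
      opEval T p x = K.orthogonalProjectionOnto (opEval S p x)) :
    TupleMultAC ev T := by
  intro p B hB hBnorm hp x y
  simpa only [hdil, Submodule.inner_orthogonalProjectionOnto_eq_of_mem_right]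
    using hS p B hB hBnorm hp x y

theorem prod {A L : Type*} [NormedAddCommGroup A] [InnerProductSpace ℂ A]
    [NormedAddCommGroup L] [InnerProductSpace ℂ L]
    {M : Fin d → A →L[ℂ] A} {U : Fin d → L →L[ℂ] L}
    (hM : TupleMultAC ev M) (hU : TupleMultAC ev U)
    {S : Fin d → WithLp 2 (A × L) →L[ℂ] WithLp 2 (A × L)}
    (hS : ∀ i v, WithLp.equiv 2 (A × L) (S i v) =
      (M i (WithLp.equiv 2 (A × L) v).1, U i (WithLp.equiv 2 (A × L) v).2)) :
    TupleMultAC ev S := by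
  have hfst (p : MvPolynomial (Fin d) ℂ) (v : WithLp 2 (A × L)) :
      (opEval S p v).ofLp.1 = opEval M p v.ofLp.1 :=
    congrArg (· v) <| ContinuousLinearMap.comp_opEval (X := WithLp.fstL 2 ℂ A L)
      (fun i => ContinuousLinearMap.ext fun v => congrArg Prod.fst (hS i v)) p
  have hsnd (p : MvPolynomial (Fin d) ℂ) (v : WithLp 2 (A × L)) :
      (opEval S p v).ofLp.2 = opEval U p v.ofLp.2 :=
    congrArg (· v) <| ContinuousLinearMap.comp_opEval (X := WithLp.sndL 2 ℂ A L)
      (fun i => ContinuousLinearMap.ext fun v => congrArg Prod.snd (hS i v)) p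
  intro p B hB hBnorm hp x y
  simp only [WithLp.prod_inner_apply, hfst, hsnd]
  simpa using (hM p B hB hBnorm hp x.ofLp.1 y.ofLp.1).add
    (hU p B hB hBnorm hp x.ofLp.2 y.ofLp.2)

end TupleMultAC

theorem stmt19_general (ev : H →ₗ[ℂ] (Ball d → ℂ))
    -- `M_z^κ`, acting diagonally on the Hilbert sum `H^κ`
    {ι : Type*}
    (Mzk : Fin d → lp (fun _ : ι => H) 2 →L[ℂ] lp (fun _ : ι => H) 2)
    (hMzkAC : TupleMultAC ev Mzk)
    -- the spherical unitary `U` on `L`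
    {L : Type*} [NormedAddCommGroup L] [InnerProductSpace ℂ L]
    (U : Fin d → L →L[ℂ] L)
    (hUAC : TupleMultAC ev U)
    -- the dilation `S = M_z^κ ⊕ U` on `H^κ ⊕ L`
    (S : Fin d → WithLp 2 (lp (fun _ : ι => H) 2 × L) →L[ℂ] WithLp 2 (lp (fun _ : ι => H) 2 × L))
    (hS : ∀ (i : Fin d) (v : WithLp 2 (lp (fun _ : ι => H) 2 × L)),
      WithLp.equiv 2 (lp (fun _ : ι => H) 2 × L) (S i v) =
        (Mzk i (WithLp.equiv 2 (lp (fun _ : ι => H) 2 × L) v).1,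
         U i (WithLp.equiv 2 (lp (fun _ : ι => H) 2 × L) v).2))
    -- `T` on the semi-invariant subspace `K`, dilated by `S`
    (K : Submodule ℂ (WithLp 2 (lp (fun _ : ι => H) 2 × L))) [CompleteSpace K]
    (T : Fin d → K →L[ℂ] K)
    (hdil : ∀ (p : MvPolynomial (Fin d) ℂ) (x : K),
      opEval T p x = Submodule.orthogonalProjectionOnto K (opEval S p (x : WithLp 2 (lp (fun _ : ι => H) 2 × L)))) :
    TupleMultAC ev T :=
  (hMzkAC.prod hUAC hS).of_dilation K hdil

/-- If a commuting tuple `T` dilates to `M_z^κ ⊕ U` — where `M_z` is the shift tuple of a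
regular unitarily invariant space `H` on the ball (acting diagonally on the `κ`-fold Hilbert
sum `H^κ`) and `U` is a spherical unitary, each assumed `Mult(H)`-absolutely continuous —
then `T` is `Mult(H)`-absolutely continuous. -/
theorem stmt19 (ev : H →ₗ[ℂ] (Ball d → ℂ)) (k : Ball d → H) (a : ℕ → ℝ)
    (ha0 : a 0 = 1) (hapos : ∀ n, 0 < a n)
    (hregular : Tendsto (fun n => a n / a (n + 1)) atTop (nhds 1))
    (hsum : ∀ z w : Ball d, Summable fun n =>
      (a n : ℂ) * (⟪(w : EuclideanSpace ℂ (Fin d)), (z : EuclideanSpace ℂ (Fin d))⟫_ℂ) ^ n)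
    (hrepr : ∀ (f : H) (z : Ball d), ev f z = ⟪k z, f⟫_ℂ)
    (hker : ∀ z w : Ball d, ⟪k w, k z⟫_ℂ = ∑' n,
      (a n : ℂ) * (⟪(w : EuclideanSpace ℂ (Fin d)), (z : EuclideanSpace ℂ (Fin d))⟫_ℂ) ^ n)
    -- the shift tuple `M_z` on `H`
    (Mz : Fin d → H →L[ℂ] H)
    (hMz : ∀ i, IsMultOp ev (fun z => (z : EuclideanSpace ℂ (Fin d)) i) (Mz i))
    -- `M_z^κ`, acting diagonally on the Hilbert sum `H^κ`
    {ι : Type*}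
    (Mzk : Fin d → lp (fun _ : ι => H) 2 →L[ℂ] lp (fun _ : ι => H) 2)
    (hMzk : ∀ (i : Fin d) (f : lp (fun _ : ι => H) 2) (j : ι), Mzk i f j = Mz i (f j))
    (hMzkAC : TupleMultAC ev Mzk)
    -- the spherical unitary `U` on `L`
    {L : Type*} [NormedAddCommGroup L] [InnerProductSpace ℂ L] [CompleteSpace L]
    (U : Fin d → L →L[ℂ] L)
    (hUcomm : ∀ i j, U i * U j = U j * U i)
    (hUnormal : ∀ i, IsStarNormal (U i))
    (hUrow : (∑ i, U i * star (U i)) = 1)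
    (hUAC : TupleMultAC ev U)
    -- the dilation `S = M_z^κ ⊕ U` on `H^κ ⊕ L`
    (S : Fin d → WithLp 2 (lp (fun _ : ι => H) 2 × L) →L[ℂ] WithLp 2 (lp (fun _ : ι => H) 2 × L))
    (hS : ∀ (i : Fin d) (v : WithLp 2 (lp (fun _ : ι => H) 2 × L)),
      WithLp.equiv 2 (lp (fun _ : ι => H) 2 × L) (S i v) =
        (Mzk i (WithLp.equiv 2 (lp (fun _ : ι => H) 2 × L) v).1,
         U i (WithLp.equiv 2 (lp (fun _ : ι => H) 2 × L) v).2))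
    -- `T` on the semi-invariant subspace `K`, dilated by `S`
    (K : Submodule ℂ (WithLp 2 (lp (fun _ : ι => H) 2 × L))) [CompleteSpace K]
    (T : Fin d → K →L[ℂ] K)
    (hTcomm : ∀ i j, T i * T j = T j * T i)
    (hdil : ∀ (p : MvPolynomial (Fin d) ℂ) (x : K),
      opEval T p x = Submodule.orthogonalProjectionOnto K (opEval S p (x : WithLp 2 (lp (fun _ : ι => H) 2 × L)))) :
    TupleMultAC ev T :=
  stmt19_general ev Mzk hMzkAC U hUAC S hS K T hdil
end
end
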